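/- arXiv:1807.07381 — 5 statements merged into one kernel-verified Lean document; each statement's English description precedes it below -/
import Mathlib

section
/- Let A be a C*-algebra and let (P_i)_{i ∈ ℕ} be a countable family of properties of separable C*-algebras, each of which is preserved under sequential inductive limits with injective connecting maps. If A separably satisfies P_i for every i ∈ ℕ, then A separably satisfies the meet of the P_i; that is, every separable closed star-subalgebra A₀ of A is contained in a separable closed star-subalgebra Â of A that satisfies P_i for all i simultaneously. -/
open TopologicalSpace

universe u

/-- A property of C*-algebras: a predicate on (non-unital) C*-algebras. -/
abbrev CStarProp : Type (u + 1) := ∀ (B : Type u) [NonUnitalCStarAlgebra B], Prop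

/-- Invariance of a property of C*-algebras under *-isomorphism. -/
def CStarProp.IsoInvariant (P : CStarProp.{u}) : Prop :=
  ∀ (B C : Type u) [NonUnitalCStarAlgebra B] [NonUnitalCStarAlgebra C],
    (B ≃⋆ₐ[ℂ] C) → P B → P C

/-- `P` holds for a closed star-subalgebra of a C*-algebra, regarded as a
C*-algebra in its own right. -/
def SatSub {A : Type u} [NonUnitalCStarAlgebra A] (P : CStarProp.{u})
    (S : NonUnitalStarSubalgebra ℂ A) (hS : IsClosed (S : Set A)) : Prop :=
  letI : IsClosed (S : Set A) := hS
  P S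

/-- `P` is preserved under sequential inductive limits with injective connecting maps:
for every C*-algebra `C` and every increasing sequence of separable closed
star-subalgebras of `C` each satisfying `P`, the closure of their union satisfies `P`. -/
def LimitClosed (P : CStarProp.{u}) : Prop :=
  ∀ (C : Type u) [NonUnitalCStarAlgebra C] (S : ℕ → NonUnitalStarSubalgebra ℂ C),
    Monotone S →
    ∀ (hcl : ∀ n, IsClosed (S n : Set C)),
    (∀ n, SeparableSpace (S n)) →
    (∀ n, SatSub P (S n) (hcl n)) →
    ∀ (T : NonUnitalStarSubalgebra ℂ C) (hT : (T : Set C) = closure (⋃ n, (S n : Set C))),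
      SatSub P T (by rw [hT]; exact isClosed_closure)

/-- `A` separably satisfies `P`: every separable closed star-subalgebra of `A` is
contained in a separable closed star-subalgebra of `A` satisfying `P`. -/
def SepSat (P : CStarProp.{u}) (A : Type u) [NonUnitalCStarAlgebra A] : Prop :=
  ∀ S₀ : NonUnitalStarSubalgebra ℂ A, IsClosed (S₀ : Set A) → SeparableSpace S₀ →
    ∃ (S : NonUnitalStarSubalgebra ℂ A) (hS : IsClosed (S : Set A)),
      SeparableSpace S ∧ S₀ ≤ S ∧ SatSub P S hS

/-- If `A` separably satisfies each of countably many properties `P i`,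
each preserved under sequential inductive limits with injective connecting maps, then `A`
separably satisfies their meet: every separable closed star-subalgebra `A₀` of `A` is
contained in a separable closed star-subalgebra `Ahat` of `A` satisfying all the `P i`. -/
theorem separably_satisfies_countable_meet {A : Type u} [NonUnitalCStarAlgebra A]
    (P : ℕ → CStarProp.{u})
    (hiso : ∀ i, (P i).IsoInvariant)
    (hlim : ∀ i, LimitClosed (P i))
    (hsep : ∀ i, SepSat (P i) A)
    (A₀ : NonUnitalStarSubalgebra ℂ A) (hA₀c : IsClosed (A₀ : Set A))
    (hA₀s : SeparableSpace A₀) :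
    ∃ (Ahat : NonUnitalStarSubalgebra ℂ A) (hAhat : IsClosed (Ahat : Set A)),
      SeparableSpace Ahat ∧ A₀ ≤ Ahat ∧ ∀ i, SatSub (P i) Ahat hAhat := by
  classical
  -- the type of "good" subalgebras
  let G := {S : NonUnitalStarSubalgebra ℂ A // IsClosed (S : Set A) ∧ SeparableSpace S}
  have key : ∀ (n : ℕ) (S : G), ∃ (S' : NonUnitalStarSubalgebra ℂ A)
      (hS' : IsClosed (S' : Set A)), SeparableSpace S' ∧ S.1 ≤ S' ∧
        SatSub (P n.unpair.1) S' hS' :=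
    fun n S => hsep n.unpair.1 S.1 S.2.1 S.2.2
  -- the recursive construction
  let F : ℕ → G → G := fun n S =>
    ⟨(key n S).choose, (key n S).choose_spec.choose, (key n S).choose_spec.choose_spec.1⟩
  let B : ℕ → G := fun n => Nat.rec ⟨A₀, hA₀c, hA₀s⟩ F n
  have hBsucc : ∀ n, B (n + 1) = F n (B n) := fun n => rfl
  have hstep : ∀ n, (B n).1 ≤ (B (n + 1)).1 := fun n =>
    (key n (B n)).choose_spec.choose_spec.2.1
  have hsat : ∀ n, SatSub (P n.unpair.1) (B (n + 1)).1 (B (n + 1)).2.1 := fun n =>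
    (key n (B n)).choose_spec.choose_spec.2.2
  have hmono : Monotone fun n => (B n).1 := monotone_nat_of_le_succ hstep
  -- the limit algebra
  let Ahat : NonUnitalStarSubalgebra ℂ A :=
    NonUnitalStarSubalgebra.topologicalClosure (⨆ n, (B n).1)
  have hdir : Directed (· ≤ ·) fun n => (B n).1 := hmono.directed_le
  have hcoe : ((⨆ n, (B n).1 : NonUnitalStarSubalgebra ℂ A) : Set A) =
      ⋃ n, ((B n).1 : Set A) := NonUnitalStarSubalgebra.coe_iSup_of_directed hdir
  have hAhatcoe : (Ahat : Set A) = closure (⋃ n, ((B n).1 : Set A)) := by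
    show closure ((⨆ n, (B n).1 : NonUnitalStarSubalgebra ℂ A) : Set A) = _
    rw [hcoe]
  have hAhatcl : IsClosed (Ahat : Set A) :=
    NonUnitalStarSubalgebra.isClosed_topologicalClosure _
  refine ⟨Ahat, hAhatcl, ?_, ?_, ?_⟩
  · -- separability
    have : IsSeparable (Ahat : Set A) := by
      rw [hAhatcoe]
      refine (IsSeparable.iUnion fun n => ?_).closure
      haveI : SeparableSpace (((B n).1 : Set A) : Type u) := (B n).2.2
      exact IsSeparable.of_subtype _
    exact this.separableSpace
  · -- A₀ ≤ Ahat
    refine le_trans ?_ (NonUnitalStarSubalgebra.le_topologicalClosure _)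
    exact le_trans (le_of_eq rfl) (le_iSup (fun n => (B n).1) 0)
  · -- each P i holds
    intro i
    have hT : (Ahat : Set A) = closure (⋃ k, (((B (Nat.pair i k + 1)).1 : Set A))) := by
      rw [hAhatcoe]
      apply subset_antisymm
      · apply closure_mono
        apply Set.iUnion_subset fun n => ?_
        refine subset_trans ?_ (Set.subset_iUnion _ n)
        exact hmono ((Nat.right_le_pair i n).trans (Nat.le_succ _))
      · apply closure_mono
        exact Set.iUnion_subset fun k =>
          Set.subset_iUnion (fun n => ((B n).1 : Set A)) (Nat.pair i k + 1)
    have hpm : Monotone fun k => Nat.pair i k :=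
      (show StrictMono fun k => Nat.pair i k from fun _ _ h =>
        Nat.pair_lt_pair_right i h).monotone
    have := hlim i A (fun k => (B (Nat.pair i k + 1)).1)
      (fun k l hkl => hmono (Nat.succ_le_succ (hpm hkl)))
      (fun k => (B (Nat.pair i k + 1)).2.1)
      (fun k => (B (Nat.pair i k + 1)).2.2)
      (fun k => by simpa [Nat.unpair_pair] using hsat (Nat.pair i k))
      Ahat hT
    exact this
end

section
/- Let E and D be C*-algebras and let q : E → D be a surjective *-homomorphism; write I = ker q, a closed two-sided star-closed ideal of E. Suppose that for each X ∈ {I, E, D} a property P_X of separable C*-algebras is given which is preserved under sequential inductive limits with injective connecting maps, and that I separably satisfies P_I, E separably satisfies P_E, and D separably satisfies P_D. Then for any given separable closed star-subalgebras I₀ ⊆ I, E₀ ⊆ E, and D₀ ⊆ D, there exist separable closed star-subalgebras Î ⊆ I, Ê ⊆ E, and D̂ ⊆ D such that: Î satisfies P_I and contains I₀; Ê satisfies P_E and contains E₀; D̂ satisfies P_D and contains D₀; the image q(Ê) equals D̂; and Î = Ê ∩ I (equivalently, Î = {x ∈ Ê : q(x) = 0}), so that the inclusions give a homomorphism from the extension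 0 → Î → Ê → D̂ → 0 into the extension 0 → I → E → D → 0. -/
open TopologicalSpace

universe u

/-!
Back and forth: starting from separable closed subalgebras `I₀ ⊆ ker q`, `E₀`, `D₀` satisfying the
properties, enlarge them alternately so that `I_n ⊆ E_{n+1}`, `E_n ∩ ker q ⊆ I_{n+1}`,
`D_n ⊆ closure (q E_{n+1})` and `q E_n ⊆ D_{n+1}`; each enlargement keeps separability because a
separable set generates a separable closed star-subalgebra. The closures of the three unions
satisfy the properties by closure under inductive limits, and the interleaving makes them exact
thanks to one C⋆-algebraic fact: `q a` has preimages in any closed star-subalgebra containing `a`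
of norm at most `‖q a‖ + ε`. It makes `q Ê` closed, and it approximates the points of
`Ê ∩ ker q` by points of `E_n ∩ ker q ⊆ I_{n+1}`.
-/

open Filter Topology
open scoped CStarAlgebra

theorem isClosed_range_of_exists_preimage_norm_le_add {E F 𝓕 : Type*} [NormedAddCommGroup E]
    [CompleteSpace E] [NormedAddCommGroup F] [FunLike 𝓕 E F] [AddMonoidHomClass 𝓕 E F]
    (f : 𝓕) (hf : Continuous f) (hlift : ∀ x, ∀ ε > 0, ∃ y, f y = f x ∧ ‖y‖ ≤ ‖f x‖ + ε) :
    IsClosed (Set.range f) := by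
  refine isClosed_of_closure_subset fun w hw => ?_
  have hr : (0 : ℝ) < 2⁻¹ := by norm_num
  choose x hx using fun n : ℕ => Metric.mem_closure_range_iff.1 hw _ (pow_pos hr n)
  choose d hfd hd using fun n => hlift (x (n + 1) - x n) _ (pow_pos hr n)
  set z : ℕ → E := fun n => x 0 + ∑ k ∈ Finset.range n, d k
  have hfz : ∀ n, f (z n) = f (x n) := fun n => by
    simp only [z, map_add, map_sum, hfd, map_sub,
      Finset.sum_range_sub (fun k => f (x k)), add_sub_cancel]
  have hz : ∀ n, dist (z n) (z (n + 1)) ≤ 3 * 2⁻¹ ^ n := fun n => by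
    have hzd : z (n + 1) - z n = d n := by simp only [z, Finset.sum_range_succ]; abel
    have hfx : ‖f (x (n + 1) - x n)‖ ≤ 2⁻¹ ^ (n + 1) + 2⁻¹ ^ n := by
      rw [map_sub, ← dist_eq_norm]
      exact (dist_triangle_left _ _ w).trans (add_le_add (hx _).le (hx n).le)
    have hpow : (2⁻¹ : ℝ) ^ (n + 1) ≤ 2⁻¹ ^ n := pow_le_pow_of_le_one hr.le (by norm_num) n.le_succ
    rw [dist_comm, dist_eq_norm, hzd]
    linarith [hd n]
  obtain ⟨y, hy⟩ := cauchySeq_tendsto_of_complete (cauchySeq_of_le_geometric _ _ (by norm_num) hz)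
  have hfx : Tendsto (fun n => f (x n)) atTop (𝓝 w) := by
    refine tendsto_iff_dist_tendsto_zero.2 (squeeze_zero (fun _ => dist_nonneg)
      (fun n => (dist_comm _ w).trans_le (hx n).le) ?_)
    exact tendsto_pow_atTop_nhds_zero_of_lt_one hr.le (by norm_num)
  refine ⟨y, tendsto_nhds_unique ((hf.tendsto y).comp hy) ?_⟩
  simpa only [Function.comp_def, hfz] using hfx

theorem closure_iUnion_eq_image_closure_iUnion {X Y : Type*} [TopologicalSpace X]
    [TopologicalSpace Y] {f : X → Y} (hf : Continuous f) {U : ℕ → Set X} {V : ℕ → Set Y}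
    (hVU : ∀ n, V n ⊆ closure (f '' U (n + 1))) (hUV : ∀ n, f '' U n ⊆ V (n + 1))
    (hclosed : IsClosed (f '' closure (⋃ n, U n))) :
    closure (⋃ n, V n) = f '' closure (⋃ n, U n) := by
  refine (closure_minimal (Set.iUnion_subset fun n => (hVU n).trans ?_) hclosed).antisymm ?_
  · exact closure_minimal (Set.image_mono (subset_closure.trans'
      (Set.subset_iUnion U (n + 1)))) hclosed
  · refine (image_closure_subset_closure_image hf).trans (closure_mono ?_)
    rw [Set.image_iUnion]
    exact Set.iUnion_subset fun n => (hUV n).trans (Set.subset_iUnion V (n + 1))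

theorem TopologicalSpace.IsSeparable.subsemigroupClosure {M : Type*} [Mul M] [TopologicalSpace M]
    [ContinuousMul M] {s : Set M} (hs : IsSeparable s) :
    IsSeparable (Subsemigroup.closure s : Set M) := by
  let u : ℕ → Set M := fun n => Nat.rec s (fun _ t => t ∪ (fun p : M × M => p.1 * p.2) '' t ×ˢ t) n
  have hu : ∀ n, IsSeparable (u n) := fun n => by
    induction n with
    | zero => exact hs
    | succ n ih => exact ih.union ((ih.prod ih).image continuous_mul)
  have hmono : Monotone u := monotone_nat_of_le_succ fun n => Set.subset_union_left
  let T : Subsemigroup M :=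
    { carrier := ⋃ n, u n
      mul_mem' := fun {a b} ha hb => by
        obtain ⟨m, hm⟩ := Set.mem_iUnion.1 ha
        obtain ⟨k, hk⟩ := Set.mem_iUnion.1 hb
        exact Set.mem_iUnion.2 ⟨max m k + 1, Or.inr ⟨(a, b), Set.mk_mem_prod
          (hmono (le_max_left m k) hm) (hmono (le_max_right m k) hk), rfl⟩⟩ }
  exact (IsSeparable.iUnion hu).mono (Subsemigroup.closure_le (S := T) |>.2 (Set.subset_iUnion u 0))

theorem TopologicalSpace.IsSeparable.nonUnitalStarAlgebraAdjoin {R A : Type*} [CommSemiring R]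
    [StarRing R] [TopologicalSpace R] [SeparableSpace R] [NonUnitalSemiring A] [StarRing A]
    [Module R A] [IsScalarTower R A A] [SMulCommClass R A A] [StarModule R A] [TopologicalSpace A]
    [ContinuousAdd A] [ContinuousMul A] [ContinuousStar A] [ContinuousSMul R A] {s : Set A}
    (hs : IsSeparable s) : IsSeparable (NonUnitalStarAlgebra.adjoin R s : Set A) := by
  rw [← NonUnitalStarSubalgebra.coe_toNonUnitalSubalgebra, ← NonUnitalSubalgebra.coe_toSubmodule,
    NonUnitalStarAlgebra.adjoin_eq_span]
  refine (hs.union ?_).subsemigroupClosure.span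
  simpa [Set.image_star] using hs.image continuous_star

theorem abs_mul_div_max_abs_sq_le {δ : ℝ} (hδ : 0 < δ) (x : ℝ) :
    |x * (δ / max |x| δ) ^ 2| ≤ δ := by
  rw [abs_mul, abs_pow, abs_div, abs_of_pos hδ, abs_of_pos (lt_max_of_lt_right hδ)]
  rcases le_total |x| δ with hx | hx
  · rw [max_eq_right hx, div_self hδ.ne', one_pow, mul_one]
    exact hx
  · rw [max_eq_left hx, div_pow, ← mul_div_assoc, div_le_iff₀ (pow_pos (hδ.trans_le hx) 2)]
    nlinarith [mul_nonneg (mul_nonneg hδ.le (abs_nonneg x)) (sub_nonneg.2 hx)]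

section CStarAlgebra

variable {A B : Type*} [NonUnitalCStarAlgebra A] [NonUnitalCStarAlgebra B]

theorem star_mul_self_sub_mul_cfcₙ (a : A) {f : ℝ → ℝ} (hf : Continuous f) (hf0 : f 0 = 0) :
    star (a - a * cfcₙ f (star a * a)) * (a - a * cfcₙ f (star a * a)) =
      cfcₙ (fun s => s * (1 - f s) ^ 2) (star a * a) := by
  set z := star a * a
  have hz : IsSelfAdjoint z := .star_mul_self a
  set c := cfcₙ f z
  have hc : star c = c := (cfcₙ_predicate f z).star_eq
  have hzc : cfcₙ (fun s => s * f s) z = z * c := by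
    rw [cfcₙ_mul (fun s => s) f z, cfcₙ_id' ℝ z]
  have hcz : cfcₙ (fun s => f s * s) z = c * z := by
    rw [cfcₙ_mul f (fun s => s) z, cfcₙ_id' ℝ z]
  have hczc : cfcₙ (fun s => f s * (s * f s)) z = c * (z * c) := by
    rw [cfcₙ_mul f (fun s => s * f s) z, hzc]
  calc star (a - a * c) * (a - a * c) = z - z * c - (c * z - c * (z * c)) := by
        rw [star_sub, star_mul, hc]; simp only [z]; noncomm_ring
    _ = cfcₙ (fun s => s - s * f s - (f s * s - f s * (s * f s))) z := by
        rw [cfcₙ_sub _ _ z, cfcₙ_sub _ _ z, cfcₙ_sub _ _ z, cfcₙ_id' ℝ z, hzc, hcz, hczc]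
    _ = cfcₙ (fun s => s * (1 - f s) ^ 2) z := cfcₙ_congr fun s _ => by ring

namespace NonUnitalStarAlgHom

/-- With `δ = (‖φ a‖ + ε) ^ 2` and `c = f (star a * a)` for `f = 1 - δ / max |·| δ`, the element
`a - a * c` works: `φ c = 0` because `f` vanishes on the spectrum of `φ (star a * a)`, and
`‖a - a * c‖ ^ 2 = ‖g (star a * a)‖ ≤ δ` for `g s = s * (1 - f s) ^ 2`. -/
theorem exists_preimage_norm_le_add (φ : A →⋆ₙₐ[ℂ] B) (a : A) {ε : ℝ} (hε : 0 < ε) :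
    ∃ b, φ b = φ a ∧ ‖b‖ ≤ ‖φ a‖ + ε := by
  set δ := (‖φ a‖ + ε) ^ 2
  have hδ : 0 < δ := by positivity
  set f : ℝ → ℝ := fun s => 1 - δ / max |s| δ
  have hf : Continuous f :=
    continuous_const.sub (continuous_const.div (by fun_prop) fun s => (lt_max_of_lt_right hδ).ne')
  have hf0 : f 0 = 0 := by simp [f, hδ.le, hδ.ne']
  have hz : IsSelfAdjoint (star a * a) := .star_mul_self a
  have hφc : φ (cfcₙ f (star a * a)) = 0 := by
    rw [NonUnitalStarAlgHomClass.map_cfcₙ (S := ℂ) φ f _ hf.continuousOn hf0 (map_continuous φ)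
      hz (hz.map φ), ← cfcₙ_zero ℝ (φ (star a * a))]
    refine cfcₙ_congr fun x hx => ?_
    have hx : |x| ≤ δ := by
      have := NonUnitalIsometricContinuousFunctionalCalculus.norm_quasispectrum_le _ hx (hz.map φ)
      rw [map_mul, map_star, CStarRing.norm_star_mul_self, Real.norm_eq_abs] at this
      nlinarith [norm_nonneg (φ a)]
    simp [f, max_eq_right hx, hδ.ne']
  refine ⟨a - a * cfcₙ f (star a * a), by rw [map_sub, map_mul, hφc, mul_zero, sub_zero], ?_⟩
  have hnorm : ‖a - a * cfcₙ f (star a * a)‖ ^ 2 ≤ δ := by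
    rw [sq, ← CStarRing.norm_star_mul_self, star_mul_self_sub_mul_cfcₙ a hf hf0]
    refine norm_cfcₙ_le fun x _ => ?_
    simp only [f, sub_sub_cancel, Real.norm_eq_abs]
    exact abs_mul_div_max_abs_sq_le hδ x
  exact (abs_le_of_sq_le_sq' hnorm (by positivity)).2

theorem exists_mem_preimage_norm_le_add (φ : A →⋆ₙₐ[ℂ] B) {S : NonUnitalStarSubalgebra ℂ A}
    (hS : IsClosed (S : Set A)) {a : A} (ha : a ∈ S) {ε : ℝ} (hε : 0 < ε) :
    ∃ b ∈ S, φ b = φ a ∧ ‖b‖ ≤ ‖φ a‖ + ε := by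
  have : IsClosed (S : Set A) := hS
  obtain ⟨b, hb, hbn⟩ :=
    (φ.comp (NonUnitalStarSubalgebraClass.subtype S)).exists_preimage_norm_le_add ⟨a, ha⟩ hε
  exact ⟨b, b.2, hb, hbn⟩

theorem isClosed_range (φ : A →⋆ₙₐ[ℂ] B) : IsClosed (Set.range φ) :=
  isClosed_range_of_exists_preimage_norm_le_add φ (map_continuous φ) fun a _ =>
    φ.exists_preimage_norm_le_add a

theorem isClosed_image (φ : A →⋆ₙₐ[ℂ] B) {S : NonUnitalStarSubalgebra ℂ A}
    (hS : IsClosed (S : Set A)) : IsClosed (φ '' S) := by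
  have : IsClosed (S : Set A) := hS
  rw [Set.image_eq_range]
  exact (φ.comp (NonUnitalStarSubalgebraClass.subtype S)).isClosed_range

theorem closure_iUnion_eq_inter_ker (φ : A →⋆ₙₐ[ℂ] B) {S : ℕ → NonUnitalStarSubalgebra ℂ A}
    (hS : ∀ n, IsClosed (S n : Set A)) {T : ℕ → Set A} (hT : ∀ n, T n ⊆ {x | φ x = 0})
    (hTS : ∀ n, T n ⊆ S (n + 1)) (hST : ∀ n, (S n : Set A) ∩ {x | φ x = 0} ⊆ T (n + 1)) :
    closure (⋃ n, T n) = closure (⋃ n, (S n : Set A)) ∩ {x | φ x = 0} := by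
  refine (closure_minimal (fun x hx => ?_) (isClosed_closure.inter
    (isClosed_eq (map_continuous φ) continuous_const))).antisymm fun x ⟨hx, hφx⟩ => ?_
  · obtain ⟨n, hxn⟩ := Set.mem_iUnion.1 hx
    exact ⟨subset_closure (Set.mem_iUnion.2 ⟨n + 1, hTS n hxn⟩), hT n hxn⟩
  refine Metric.mem_closure_iff.2 fun ε hε => ?_
  obtain ⟨a, ha, hxa⟩ := Metric.mem_closure_iff.1 hx (ε / 3) (by positivity)
  obtain ⟨n, han⟩ := Set.mem_iUnion.1 ha
  have hφa : ‖φ a‖ < ε / 3 := calc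
    ‖φ a‖ = ‖φ (a - x)‖ := by rw [map_sub, show φ x = 0 from hφx, sub_zero]
    _ ≤ ‖a - x‖ := NonUnitalStarAlgHom.norm_apply_le φ _
    _ < ε / 3 := by rwa [← dist_eq_norm, dist_comm]
  obtain ⟨b, hbS, hφb, hb⟩ :=
    φ.exists_mem_preimage_norm_le_add (hS n) han (by positivity : 0 < ε / 3)
  refine ⟨a - b, Set.mem_iUnion.2 ⟨n + 1, hST n ⟨sub_mem han hbS, ?_⟩⟩, ?_⟩
  · simp [hφb]
  · calc dist x (a - b) ≤ dist x a + dist a (a - b) := dist_triangle _ _ _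
      _ < ε := by rw [dist_eq_norm a, sub_sub_cancel]; linarith

end NonUnitalStarAlgHom

end CStarAlgebra

theorem TopologicalSpace.IsSeparable.exists_isSeparable_subset_closure_image {X Y : Type*}
    [TopologicalSpace X] [TopologicalSpace Y] {f : X → Y} (hf : Function.Surjective f)
    {t : Set Y} (ht : IsSeparable t) : ∃ s : Set X, IsSeparable s ∧ t ⊆ closure (f '' s) := by
  obtain ⟨c, hc, htc⟩ := ht
  refine ⟨Function.surjInv hf '' c, (hc.image _).isSeparable, ?_⟩
  rwa [Function.LeftInverse.image_image (Function.rightInverse_surjInv hf)]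

theorem NonUnitalStarSubalgebra.coe_topologicalClosure_iSup {R A : Type*} [CommSemiring R]
    [StarRing R] [TopologicalSpace A] [NonUnitalSemiring A] [StarRing A] [Module R A]
    [IsScalarTower R A A] [SMulCommClass R A A] [StarModule R A] [IsSemitopologicalSemiring A]
    [ContinuousStar A] [ContinuousConstSMul R A] {S : ℕ → NonUnitalStarSubalgebra R A}
    (hS : Monotone S) : ((⨆ n, S n).topologicalClosure : Set A) = closure (⋃ n, (S n : Set A)) :=
  congrArg closure (coe_iSup_of_directed hS.directed_le)

section SeparablySatisfies

variable {A : Type u} [NonUnitalCStarAlgebra A] {P : CStarProp.{u}}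

def ClosedSepSat (P : CStarProp.{u}) (S : NonUnitalStarSubalgebra ℂ A) : Prop :=
  ∃ hS : IsClosed (S : Set A), SeparableSpace S ∧ SatSub P S hS

theorem ClosedSepSat.isSeparable {S : NonUnitalStarSubalgebra ℂ A} (h : ClosedSepSat P S) :
    IsSeparable (S : Set A) :=
  have := h.2.1
  .of_subtype _

theorem ClosedSepSat.topologicalClosure_iSup (hP : LimitClosed P)
    {S : ℕ → NonUnitalStarSubalgebra ℂ A} (hS : Monotone S) (h : ∀ n, ClosedSepSat P (S n)) :
    ClosedSepSat P (⨆ n, S n).topologicalClosure := by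
  choose hc hs hsat using h
  have hcoe := NonUnitalStarSubalgebra.coe_topologicalClosure_iSup hS
  refine ⟨isClosed_closure, ?_, hP A S hS hc hs hsat _ hcoe⟩
  refine IsSeparable.separableSpace ?_
  rw [hcoe]
  exact (IsSeparable.iUnion fun n => have := hs n; .of_subtype _).closure

def SepSatWithin (P : CStarProp.{u}) (K : NonUnitalStarSubalgebra ℂ A) : Prop :=
  ∀ S₀ : NonUnitalStarSubalgebra ℂ A, (S₀ : Set A) ⊆ K → IsClosed (S₀ : Set A) →
    SeparableSpace S₀ → ∃ (S : NonUnitalStarSubalgebra ℂ A) (hS : IsClosed (S : Set A)),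
      (S : Set A) ⊆ K ∧ SeparableSpace S ∧ S₀ ≤ S ∧ SatSub P S hS

theorem SepSat.sepSatWithin_top (h : SepSat P A) :
    SepSatWithin P (⊤ : NonUnitalStarSubalgebra ℂ A) := fun S₀ _ hc hs =>
  let ⟨S, hS, hSs, hle, hsat⟩ := h S₀ hc hs
  ⟨S, hS, fun _ _ => trivial, hSs, hle, hsat⟩

theorem SepSatWithin.exists_closedSepSat_superset {K : NonUnitalStarSubalgebra ℂ A}
    (h : SepSatWithin P K) (hK : IsClosed (K : Set A)) {s : Set A} (hs : IsSeparable s)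
    (hsK : s ⊆ K) :
    ∃ S : NonUnitalStarSubalgebra ℂ A, ClosedSepSat P S ∧ s ⊆ S ∧ (S : Set A) ⊆ K := by
  set S₀ := (NonUnitalStarAlgebra.adjoin ℂ s).topologicalClosure
  have hS₀K : (S₀ : Set A) ⊆ K :=
    NonUnitalStarSubalgebra.topologicalClosure_minimal _ (NonUnitalStarAlgebra.adjoin_le hsK) hK
  obtain ⟨S, hS, hSK, hSs, hle, hsat⟩ := h S₀ hS₀K isClosed_closure
    (hs.nonUnitalStarAlgebraAdjoin (R := ℂ)).closure.separableSpace
  refine ⟨S, ⟨hS, hSs, hsat⟩, ?_, hSK⟩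
  exact (NonUnitalStarAlgebra.subset_adjoin ℂ s).trans (subset_closure.trans hle)

end SeparablySatisfies

structure Stage {A B : Type u} [NonUnitalCStarAlgebra A] [NonUnitalCStarAlgebra B]
    (q : A →⋆ₙₐ[ℂ] B) (PI PE PD : CStarProp.{u}) where
  I : NonUnitalStarSubalgebra ℂ A
  E : NonUnitalStarSubalgebra ℂ A
  D : NonUnitalStarSubalgebra ℂ B
  closedSepSat_I : ClosedSepSat PI I
  closedSepSat_E : ClosedSepSat PE E
  closedSepSat_D : ClosedSepSat PD D
  I_subset_ker : (I : Set A) ⊆ {x | q x = 0}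

namespace Stage

variable {A B : Type u} [NonUnitalCStarAlgebra A] [NonUnitalCStarAlgebra B]
  {q : A →⋆ₙₐ[ℂ] B} {PI PE PD : CStarProp.{u}}

def IsExact (p : Stage q PI PE PD) : Prop :=
  (p.D : Set B) = q '' p.E ∧ (p.I : Set A) = (p.E : Set A) ∩ {x | q x = 0}

structure Next (p p' : Stage q PI PE PD) : Prop where
  I_le : p.I ≤ p'.I
  E_le : p.E ≤ p'.E
  D_le : p.D ≤ p'.D
  I_subset_E : (p.I : Set A) ⊆ p'.E
  E_inter_ker_subset_I : (p.E : Set A) ∩ {x | q x = 0} ⊆ p'.I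
  D_subset_closure_image_E : (p.D : Set B) ⊆ closure (q '' p'.E)
  image_E_subset_D : q '' p.E ⊆ p'.D

open NonUnitalStarSubalgebra in
theorem exists_isExact_of_next (hPI : LimitClosed PI) (hPE : LimitClosed PE)
    (hPD : LimitClosed PD) {F : ℕ → Stage q PI PE PD} (hF : ∀ n, (F n).Next (F (n + 1))) :
    ∃ p : Stage q PI PE PD, (F 0).I ≤ p.I ∧ (F 0).E ≤ p.E ∧ (F 0).D ≤ p.D ∧ p.IsExact := by
  have hImono : Monotone fun n => (F n).I := monotone_nat_of_le_succ fun n => (hF n).I_le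
  have hEmono : Monotone fun n => (F n).E := monotone_nat_of_le_succ fun n => (hF n).E_le
  have hDmono : Monotone fun n => (F n).D := monotone_nat_of_le_succ fun n => (hF n).D_le
  have hIcoe := coe_topologicalClosure_iSup hImono
  have hEcoe := coe_topologicalClosure_iSup hEmono
  have hDcoe := coe_topologicalClosure_iSup hDmono
  have hIE := q.closure_iUnion_eq_inter_ker (fun n => (F n).closedSepSat_E.1)
    (fun n => (F n).I_subset_ker) (fun n => (hF n).I_subset_E)
    (fun n => (hF n).E_inter_ker_subset_I)
  have hDE := closure_iUnion_eq_image_closure_iUnion (map_continuous q)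
    (fun n => (hF n).D_subset_closure_image_E) (fun n => (hF n).image_E_subset_D)
    (hEcoe ▸ q.isClosed_image isClosed_closure)
  let p : Stage q PI PE PD :=
    { I := (⨆ n, (F n).I).topologicalClosure
      E := (⨆ n, (F n).E).topologicalClosure
      D := (⨆ n, (F n).D).topologicalClosure
      closedSepSat_I := .topologicalClosure_iSup hPI hImono fun n => (F n).closedSepSat_I
      closedSepSat_E := .topologicalClosure_iSup hPE hEmono fun n => (F n).closedSepSat_E
      closedSepSat_D := .topologicalClosure_iSup hPD hDmono fun n => (F n).closedSepSat_D
      I_subset_ker := by rw [hIcoe, hIE]; exact Set.inter_subset_right }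
  exact ⟨p, (le_iSup (fun n => (F n).I) 0).trans (le_topologicalClosure _),
    (le_iSup (fun n => (F n).E) 0).trans (le_topologicalClosure _),
    (le_iSup (fun n => (F n).D) 0).trans (le_topologicalClosure _),
    hDcoe.trans (hEcoe ▸ hDE), hIcoe.trans (hEcoe ▸ hIE)⟩

variable (hI : SepSatWithin PI (NonUnitalStarAlgHom.equalizer q 0)) (hE : SepSat PE A)
  (hD : SepSat PD B)
include hI hE hD

theorem exists_superset {sI sE : Set A} {sD : Set B} (hsI : IsSeparable sI)
    (hsIker : sI ⊆ {x | q x = 0}) (hsE : IsSeparable sE) (hsD : IsSeparable sD) :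
    ∃ p : Stage q PI PE PD, sI ⊆ p.I ∧ sE ⊆ p.E ∧ sD ⊆ p.D := by
  obtain ⟨I, hIsat, hsI', hIker⟩ := hI.exists_closedSepSat_superset
    (isClosed_eq (map_continuous q) (map_continuous 0)) hsI hsIker
  obtain ⟨E, hEsat, hsE', -⟩ := hE.sepSatWithin_top.exists_closedSepSat_superset
    isClosed_univ hsE fun _ _ => trivial
  obtain ⟨D, hDsat, hsD', -⟩ := hD.sepSatWithin_top.exists_closedSepSat_superset
    isClosed_univ hsD fun _ _ => trivial
  exact ⟨⟨I, E, D, hIsat, hEsat, hDsat, hIker⟩, hsI', hsE', hsD'⟩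

theorem exists_next (hq : Function.Surjective q) (p : Stage q PI PE PD) :
    ∃ p' : Stage q PI PE PD, p.Next p' := by
  have hIs := p.closedSepSat_I.isSeparable
  have hEs := p.closedSepSat_E.isSeparable
  obtain ⟨s, hs, hDs⟩ := p.closedSepSat_D.isSeparable.exists_isSeparable_subset_closure_image hq
  obtain ⟨p', hI', hE', hD'⟩ := exists_superset hI hE hD
    (sI := p.I ∪ ((p.E : Set A) ∩ {x | q x = 0})) (sE := (p.E : Set A) ∪ p.I ∪ s)
    (sD := (p.D : Set B) ∪ q '' p.E)
    (hIs.union (hEs.mono Set.inter_subset_left))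
    (Set.union_subset p.I_subset_ker Set.inter_subset_right)
    ((hEs.union hIs).union hs) (p.closedSepSat_D.isSeparable.union (hEs.image (map_continuous q)))
  refine ⟨p', fun x hx => hI' (.inl hx), fun x hx => hE' (.inl (.inl hx)),
    fun x hx => hD' (.inl hx), fun x hx => hE' (.inl (.inr hx)), fun x hx => hI' (.inr hx),
    hDs.trans (closure_mono (Set.image_mono fun x hx => hE' (.inr hx))),
    fun y hy => hD' (.inr hy)⟩

theorem exists_isExact_le (hPI : LimitClosed PI) (hPE : LimitClosed PE)
    (hPD : LimitClosed PD) (hq : Function.Surjective q) (p₀ : Stage q PI PE PD) :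
    ∃ p : Stage q PI PE PD, p₀.I ≤ p.I ∧ p₀.E ≤ p.E ∧ p₀.D ≤ p.D ∧ p.IsExact := by
  choose next hnext using exists_next hI hE hD hq
  exact exists_isExact_of_next hPI hPE hPD (F := fun n => next^[n] p₀) fun n => by
    simpa only [Function.iterate_succ_apply'] using hnext (next^[n] p₀)

end Stage

theorem separable_subextension_general
    {E D : Type u} [NonUnitalCStarAlgebra E] [NonUnitalCStarAlgebra D]
    (q : E →⋆ₙₐ[ℂ] D) (hq : Function.Surjective q)
    (PI PE PD : CStarProp.{u})
    (hPIlim : LimitClosed PI) (hPElim : LimitClosed PE) (hPDlim : LimitClosed PD)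
    -- `I = ker q` separably satisfies `P_I`:
    (hIsep : ∀ S₀ : NonUnitalStarSubalgebra ℂ E, (S₀ : Set E) ⊆ {x | q x = 0} →
      IsClosed (S₀ : Set E) → SeparableSpace S₀ →
      ∃ (S : NonUnitalStarSubalgebra ℂ E) (hS : IsClosed (S : Set E)),
        (S : Set E) ⊆ {x | q x = 0} ∧ SeparableSpace S ∧ S₀ ≤ S ∧ SatSub PI S hS)
    (hEsep : SepSat PE E) (hDsep : SepSat PD D)
    (I₀ E₀ : NonUnitalStarSubalgebra ℂ E) (D₀ : NonUnitalStarSubalgebra ℂ D)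
    (hI₀ker : (I₀ : Set E) ⊆ {x | q x = 0})
    (hI₀s : SeparableSpace I₀)
    (hE₀s : SeparableSpace E₀)
    (hD₀s : SeparableSpace D₀) :
    ∃ (Ihat Ehat : NonUnitalStarSubalgebra ℂ E) (Dhat : NonUnitalStarSubalgebra ℂ D)
      (hIhat : IsClosed (Ihat : Set E)) (hEhat : IsClosed (Ehat : Set E))
      (hDhat : IsClosed (Dhat : Set D)),
      SeparableSpace Ihat ∧ SeparableSpace Ehat ∧ SeparableSpace Dhat ∧
      I₀ ≤ Ihat ∧ E₀ ≤ Ehat ∧ D₀ ≤ Dhat ∧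
      SatSub PI Ihat hIhat ∧ SatSub PE Ehat hEhat ∧ SatSub PD Dhat hDhat ∧
      (Dhat : Set D) = q '' (Ehat : Set E) ∧
      (Ihat : Set E) = (Ehat : Set E) ∩ {x | q x = 0} := by
  have hI : SepSatWithin PI (NonUnitalStarAlgHom.equalizer q 0) := hIsep
  obtain ⟨p₀, hI₀, hE₀, hD₀⟩ := Stage.exists_superset hI hEsep hDsep (.of_subtype I₀) hI₀ker
    (.of_subtype E₀) (.of_subtype D₀)
  obtain ⟨p, hIp, hEp, hDp, hDE, hIE⟩ :=
    Stage.exists_isExact_le hI hEsep hDsep hPIlim hPElim hPDlim hq p₀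
  obtain ⟨hIc, hIs, hIsat⟩ := p.closedSepSat_I
  obtain ⟨hEc, hEs, hEsat⟩ := p.closedSepSat_E
  obtain ⟨hDc, hDs, hDsat⟩ := p.closedSepSat_D
  exact ⟨p.I, p.E, p.D, hIc, hEc, hDc, hIs, hEs, hDs, hI₀.trans hIp, hE₀.trans hEp,
    hD₀.trans hDp, hIsat, hEsat, hDsat, hDE, hIE⟩

/-- Given a surjective *-homomorphism `q : E → D` with kernel `I`,
properties `P_I, P_E, P_D` of separable C*-algebras preserved under sequential inductive
limits with injective connecting maps, such that `I` separably satisfies `P_I` (phrased via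
closed star-subalgebras of `E` contained in `ker q`), `E` separably satisfies `P_E`, and `D`
separably satisfies `P_D`, then any given separable closed star-subalgebras
`I₀ ⊆ I`, `E₀ ⊆ E`, `D₀ ⊆ D` are contained in separable closed star-subalgebras
`Ihat`, `Ehat`, `Dhat` satisfying the respective properties, with `q(Ehat) = Dhat` and
`Ihat = Ehat ∩ I`, giving a homomorphism of extensions. -/
theorem separable_subextension
    {E D : Type u} [NonUnitalCStarAlgebra E] [NonUnitalCStarAlgebra D]
    (q : E →⋆ₙₐ[ℂ] D) (hq : Function.Surjective q)
    (PI PE PD : CStarProp.{u})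
    (hPIiso : PI.IsoInvariant) (hPEiso : PE.IsoInvariant) (hPDiso : PD.IsoInvariant)
    (hPIlim : LimitClosed PI) (hPElim : LimitClosed PE) (hPDlim : LimitClosed PD)
    -- `I = ker q` separably satisfies `P_I`:
    (hIsep : ∀ S₀ : NonUnitalStarSubalgebra ℂ E, (S₀ : Set E) ⊆ {x | q x = 0} →
      IsClosed (S₀ : Set E) → SeparableSpace S₀ →
      ∃ (S : NonUnitalStarSubalgebra ℂ E) (hS : IsClosed (S : Set E)),
        (S : Set E) ⊆ {x | q x = 0} ∧ SeparableSpace S ∧ S₀ ≤ S ∧ SatSub PI S hS)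
    (hEsep : SepSat PE E) (hDsep : SepSat PD D)
    (I₀ E₀ : NonUnitalStarSubalgebra ℂ E) (D₀ : NonUnitalStarSubalgebra ℂ D)
    (hI₀ker : (I₀ : Set E) ⊆ {x | q x = 0})
    (hI₀c : IsClosed (I₀ : Set E)) (hI₀s : SeparableSpace I₀)
    (hE₀c : IsClosed (E₀ : Set E)) (hE₀s : SeparableSpace E₀)
    (hD₀c : IsClosed (D₀ : Set D)) (hD₀s : SeparableSpace D₀) :
    ∃ (Ihat Ehat : NonUnitalStarSubalgebra ℂ E) (Dhat : NonUnitalStarSubalgebra ℂ D)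
      (hIhat : IsClosed (Ihat : Set E)) (hEhat : IsClosed (Ehat : Set E))
      (hDhat : IsClosed (Dhat : Set D)),
      SeparableSpace Ihat ∧ SeparableSpace Ehat ∧ SeparableSpace Dhat ∧
      I₀ ≤ Ihat ∧ E₀ ≤ Ehat ∧ D₀ ≤ Dhat ∧
      SatSub PI Ihat hIhat ∧ SatSub PE Ehat hEhat ∧ SatSub PD Dhat hDhat ∧
      (Dhat : Set D) = q '' (Ehat : Set E) ∧
      (Ihat : Set E) = (Ehat : Set E) ∩ {x | q x = 0} :=
  separable_subextension_general q hq PI PE PD hPIlim hPElim hPDlim hIsep hEsep hDsep I₀ E₀ D₀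
    hI₀ker hI₀s hE₀s hD₀s
end

section
/- Let P be a property of separable C*-algebras that is preserved under sequential inductive limits with injective connecting maps and is preserved by ideals of separable C*-algebras, meaning: whenever a separable C*-algebra E satisfies P and J is a closed two-sided ideal of E, then J (viewed as a C*-algebra) satisfies P. Then the property 'separably satisfies P' is preserved by ideals among all C*-algebras: if a C*-algebra A separably satisfies P and I is a closed two-sided ideal of A, then I separably satisfies P. -/
open TopologicalSpace

universe u

/-- A closed star-subalgebra, regarded as a C*-algebra in its own right,
separably satisfies `P`. -/
def SepSatSub {A : Type u} [NonUnitalCStarAlgebra A] (P : CStarProp.{u})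
    (S : NonUnitalStarSubalgebra ℂ A) (hS : IsClosed (S : Set A)) : Prop :=
  letI : IsClosed (S : Set A) := hS
  SepSat P S

/-- If `P` is a property of separable C*-algebras preserved under sequential
inductive limits with injective connecting maps and preserved by (closed two-sided) ideals of
separable C*-algebras, then 'separably satisfies `P`' is preserved by closed two-sided ideals:
if `A` separably satisfies `P` and `I` is a closed two-sided ideal of `A` (closed two-sided
ideals of C*-algebras are automatically star-closed, so we encode them as closed
star-subalgebras which absorb multiplication), then `I` separably satisfies `P`. -/
theorem sepSat_of_ideal {A : Type u} [NonUnitalCStarAlgebra A]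
    (P : CStarProp.{u})
    (hiso : P.IsoInvariant)
    (hlim : LimitClosed P)
    (hideal : ∀ (E : Type u) [NonUnitalCStarAlgebra E], SeparableSpace E → P E →
      ∀ (J : NonUnitalStarSubalgebra ℂ E),
        (∀ a x : E, x ∈ J → a * x ∈ J ∧ x * a ∈ J) →
        ∀ (hJ : IsClosed (J : Set E)), SatSub P J hJ)
    (hA : SepSat P A)
    (I : NonUnitalStarSubalgebra ℂ A)
    (hIdeal : ∀ a x : A, x ∈ I → a * x ∈ I ∧ x * a ∈ I)
    (hIc : IsClosed (I : Set A)) :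
    SepSatSub P I hIc := by
  intro S₀ hS₀c hS₀sep
  -- Push `S₀` forward into `A`.
  set ι : ↥I →⋆ₙₐ[ℂ] A := NonUnitalStarSubalgebraClass.subtype I with hι
  set S₀' : NonUnitalStarSubalgebra ℂ A := S₀.map ι with hS₀'
  have hcoe : (S₀' : Set A) = Subtype.val '' (S₀ : Set ↥I) := by
    rw [hS₀', NonUnitalStarSubalgebra.coe_map]; rfl
  have hS₀'c : IsClosed (S₀' : Set A) := by
    rw [hcoe]
    exact (hIc.isClosedEmbedding_subtypeVal.isClosedMap _ hS₀c)
  have hS₀'sep : SeparableSpace ↥S₀' := by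
    have hsurj : Function.Surjective
        (fun x : ↥S₀ => (⟨(x : ↥I), show ((x : ↥I) : A) ∈ S₀.map ι from ⟨x, x.2, rfl⟩⟩ : ↥S₀')) := by
      rintro ⟨y, hy⟩
      rw [hS₀'] at hy
      obtain ⟨x, hx, rfl⟩ := hy
      exact ⟨⟨x, hx⟩, rfl⟩
    exact hsurj.denseRange.separableSpace
      (Continuous.subtype_mk (continuous_subtype_val.subtype_val) _)
  obtain ⟨T, hTc, hTsep, hle, hTP⟩ := hA S₀' hS₀'c hS₀'sep
  haveI : IsClosed (T : Set A) := hTc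
  have hTP' : P ↥T := hTP
  -- `J` is the ideal `T ∩ I` of `T`.
  set J : NonUnitalStarSubalgebra ℂ ↥T :=
    I.comap (NonUnitalStarSubalgebraClass.subtype T) with hJ
  have hJmem : ∀ x : ↥T, x ∈ J ↔ (x : A) ∈ I := fun x => Iff.rfl
  have hJideal : ∀ a x : ↥T, x ∈ J → a * x ∈ J ∧ x * a ∈ J := by
    intro a x hx
    exact hIdeal (a : A) (x : A) hx
  have hJc : IsClosed (J : Set ↥T) := by
    have : (J : Set ↥T) = Subtype.val ⁻¹' (I : Set A) := rfl
    rw [this]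
    exact hIc.preimage continuous_subtype_val
  haveI : SecondCountableTopology ↥T := UniformSpace.secondCountable_of_separable ↥T
  haveI : IsClosed (J : Set ↥T) := hJc
  have hJP : P ↥J := hideal ↥T hTsep hTP' J hJideal hJc
  haveI : SeparableSpace ↥J := SecondCountableTopology.to_separableSpace
  -- `S` is `T ∩ I` viewed inside `I`.
  refine ⟨T.comap (NonUnitalStarSubalgebraClass.subtype I), ?_, ?_, ?_, ?_⟩
  case refine_1 =>
    have : ((T.comap (NonUnitalStarSubalgebraClass.subtype I)) : Set ↥I)
        = Subtype.val ⁻¹' (T : Set A) := rfl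
    rw [this]
    exact hTc.preimage continuous_subtype_val
  all_goals {
    set S : NonUnitalStarSubalgebra ℂ ↥I :=
      T.comap (NonUnitalStarSubalgebraClass.subtype I) with hS
    have hSmem : ∀ x : ↥I, x ∈ S ↔ (x : A) ∈ T := fun x => Iff.rfl
    haveI : IsClosed (S : Set ↥I) := by
      have : (S : Set ↥I) = Subtype.val ⁻¹' (T : Set A) := rfl
      rw [this]; exact hTc.preimage continuous_subtype_val
    have e : ↥J ≃⋆ₐ[ℂ] ↥S :=
      { toFun := fun x => ⟨⟨(x : A), x.2⟩, x.1.2⟩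
        invFun := fun x => ⟨⟨(x : A), x.2⟩, x.1.2⟩
        left_inv := fun x => rfl
        right_inv := fun x => rfl
        map_mul' := fun x y => rfl
        map_add' := fun x y => rfl
        map_smul' := fun c x => rfl
        map_star' := fun x => rfl }
    let f : ↥J → ↥S := fun x => ⟨⟨(x : A), x.2⟩, x.1.2⟩
    have hfsurj : Function.Surjective f := fun y => ⟨⟨⟨(y : A), y.2⟩, y.1.2⟩, rfl⟩
    have hfcont : Continuous f := by
      apply Continuous.subtype_mk
      apply Continuous.subtype_mk
      exact continuous_subtype_val.comp continuous_subtype_val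
    haveI hSsep : SeparableSpace ↥S := hfsurj.denseRange.separableSpace hfcont
    have hSP : P ↥S := hiso ↥J ↥S e hJP
    first
    | exact hSsep
    | exact (fun x hx => hle (by rw [hS₀']; exact ⟨x, hx, rfl⟩))
    | exact hSP }
end

section
/- Let P be a property of separable C*-algebras that is preserved by hereditary subalgebras of separable C*-algebras, meaning: whenever a separable C*-algebra E satisfies P and H is a hereditary C*-subalgebra of E, then H satisfies P. Then the property 'separably satisfies P' is preserved by hereditary subalgebras among all C*-algebras: if a C*-algebra A separably satisfies P and B is a hereditary C*-subalgebra of A, then B separably satisfies P. -/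
open TopologicalSpace

universe u

/-- `H` is a hereditary C*-subalgebra of `A`: a closed star-subalgebra such that whenever
`0 ≤ a ≤ h` with `h ∈ H`, also `a ∈ H`.  Here positivity in a C*-algebra is expressed in the
canonical way: `0 ≤ y` iff `y = star z * z` for some `z`. -/
def IsHereditary {A : Type u} [NonUnitalCStarAlgebra A]
    (H : NonUnitalStarSubalgebra ℂ A) : Prop :=
  ∀ a h : A, h ∈ H → (∃ z : A, a = star z * z) → (∃ z : A, h - a = star z * z) → a ∈ H

/-!
Given a separable `S₀ ≤ B`, enlarge it inside `A` to a separable `S ≥ S₀` satisfying `P`.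
Then `B ⊓ S` is hereditary in the separable C*-algebra `S`, hence satisfies `P`; it is
separable, contains `S₀`, and is a closed star-subalgebra of `B`.
-/

namespace NonUnitalStarSubalgebra

open NonUnitalStarSubalgebraClass

variable {R A : Type*} [CommSemiring R] [NonUnitalNonAssocSemiring A] [Star A] [Module R A]

/-- Both sides are `B ⊓ S`, seen from inside `S` and from inside `B` respectively. -/
def comapSubtypeEquivComapSubtype (B S : NonUnitalStarSubalgebra R A) :
    B.comap (subtype S) ≃⋆ₐ[R] S.comap (subtype B) where
  toFun x := ⟨⟨x.1, x.2⟩, x.1.2⟩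
  invFun x := ⟨⟨x.1, x.2⟩, x.1.2⟩
  left_inv _ := rfl
  right_inv _ := rfl
  map_mul' _ _ := rfl
  map_add' _ _ := rfl
  map_smul' _ _ := rfl
  map_star' _ := rfl

theorem separableSpace_map {B : Type*} [NonUnitalNonAssocSemiring B] [Star B] [Module R B]
    [TopologicalSpace A] [TopologicalSpace B] (S : NonUnitalStarSubalgebra R A)
    [SeparableSpace S] (φ : A →⋆ₙₐ[R] B) (hφ : Continuous φ) : SeparableSpace (S.map φ) := by
  let f : S → S.map φ := fun x ↦ ⟨φ x, x, x.2, rfl⟩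
  have hf : Function.Surjective f := by
    rintro ⟨_, x, hx, rfl⟩
    exact ⟨⟨x, hx⟩, rfl⟩
  exact hf.denseRange.separableSpace (by fun_prop)

end NonUnitalStarSubalgebra

theorem StarAlgEquiv.separableSpace {C D : Type*} [NonUnitalCStarAlgebra C]
    [NonUnitalCStarAlgebra D] [SeparableSpace C] (e : C ≃⋆ₐ[ℂ] D) : SeparableSpace D :=
  e.surjective.denseRange.separableSpace (NonUnitalStarAlgHom.isometry e e.injective).continuous

theorem IsHereditary.comap {A C : Type u} [NonUnitalCStarAlgebra A] [NonUnitalCStarAlgebra C]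
    {B : NonUnitalStarSubalgebra ℂ A} (hB : IsHereditary B) (φ : C →⋆ₙₐ[ℂ] A) :
    IsHereditary (B.comap φ) := by
  rintro a h hh ⟨z, rfl⟩ ⟨w, hw⟩
  refine hB (φ (star z * z)) (φ h) hh ⟨φ z, by rw [map_mul, map_star]⟩ ⟨φ w, ?_⟩
  rw [← map_star, ← map_mul, ← hw, map_sub]

open NonUnitalStarSubalgebra NonUnitalStarSubalgebraClass in
/-- If `P` is a property of separable C*-algebras preserved by hereditary
subalgebras of separable C*-algebras, then 'separably satisfies `P`' is preserved by
hereditary subalgebras among all C*-algebras: if `A` separably satisfies `P` and `B` is a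
hereditary C*-subalgebra of `A`, then `B` separably satisfies `P`. -/
theorem sepSat_of_hereditary {A : Type u} [NonUnitalCStarAlgebra A]
    (P : CStarProp.{u})
    (hiso : P.IsoInvariant)
    (hher : ∀ (E : Type u) [NonUnitalCStarAlgebra E], SeparableSpace E → P E →
      ∀ (H : NonUnitalStarSubalgebra ℂ E), IsHereditary H →
        ∀ (hHc : IsClosed (H : Set E)), SatSub P H hHc)
    (hA : SepSat P A)
    (B : NonUnitalStarSubalgebra ℂ A)
    (hBher : IsHereditary B)
    (hBc : IsClosed (B : Set A)) :
    SepSatSub P B hBc := by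
  -- `IsClosed` instances give the subalgebras below their C*-algebra structure
  have := hBc
  intro S₀ hS₀c hS₀sep
  obtain ⟨S, hSc, hSsep, hS₀S, hPS⟩ := hA (S₀.map (subtype B))
    (hBc.isClosedEmbedding_subtypeVal.isClosedMap _ hS₀c)
    (S₀.separableSpace_map _ continuous_subtype_val)
  have := hSc
  let H := B.comap (subtype S)
  have hHc : IsClosed (H : Set S) := hBc.preimage continuous_subtype_val
  let T := S.comap (subtype B)
  have hTc : IsClosed (T : Set B) := hSc.preimage continuous_subtype_val
  have := hHc
  have := hTc
  let e : H ≃⋆ₐ[ℂ] T := comapSubtypeEquivComapSubtype B S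
  refine ⟨T, hTc, e.separableSpace, fun b hb ↦ hS₀S ⟨b, hb, rfl⟩, hiso H T e ?_⟩
  exact hher S hSsep hPS H (hBher.comap _) hHc
end

section
/- Suppose A and B are C*-algebras such that A is separable and B is unital, and suppose φ : A → B is a full *-homomorphism. Then there is a separable closed star-subalgebra B₀ of B which is unital (contains the unit of B) and contains φ(A), such that the corestriction of φ to B₀ is full: for every nonzero a ∈ A, the smallest closed two-sided ideal of B₀ containing φ(a) is all of B₀. -/
/-!
For each nonzero `a`, fullness puts `1` in the closure of the ideal generated by `φ a`, so some
finite sum `∑ xₖ * φ a * yₖ` lies within distance `1` of `1`. This is an open condition in `a`,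
so by Lindelöf countably many coefficient lists serve all nonzero `a`. The C*-algebra `B₀`
generated by `φ(A)` and these countably many coefficients is separable, and for nonzero `a` the
sum `∑ xₖ * φ a * yₖ` lies in every ideal of `B₀` containing `φ a` and is invertible in `B₀` by the
Neumann series.
-/

open TopologicalSpace

universe u

namespace TopologicalSpace.IsSeparable

lemma submonoidClosure {M : Type*} [Monoid M] [TopologicalSpace M] [ContinuousMul M]
    {s : Set M} (hs : IsSeparable s) : IsSeparable (Submonoid.closure s : Set M) := by
  have hprod (n : ℕ) : Continuous fun f : Fin n → M => (List.ofFn f).prod := by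
    simpa only [List.ofFn_eq_map] using
      continuous_list_prod (List.finRange n) fun i _ => continuous_apply i
  refine .mono (.iUnion fun n => .image (isSeparable_pi fun _ => hs) (hprod n)) fun x hx => ?_
  obtain ⟨l, hl, rfl⟩ := Submonoid.exists_list_of_mem_closure hx
  exact Set.mem_iUnion.2
    ⟨l.length, l.get, fun i => hl _ (l.get_mem i), congrArg List.prod (List.ofFn_get l)⟩

lemma starAlgebraAdjoin {R A : Type*} [CommSemiring R] [StarRing R] [TopologicalSpace R]
    [SeparableSpace R] [Semiring A] [StarRing A] [Algebra R A] [StarModule R A]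
    [TopologicalSpace A] [ContinuousAdd A] [ContinuousMul A] [ContinuousStar A]
    [ContinuousSMul R A] {s : Set A} (hs : IsSeparable s) :
    IsSeparable (StarAlgebra.adjoin R s : Set A) := by
  have hspan : (StarAlgebra.adjoin R s : Set A) =
      Submodule.span R (Submonoid.closure (s ∪ star '' s) : Set A) := by
    rw [Set.image_star]
    exact congrArg SetLike.coe (StarAlgebra.adjoin_eq_span s)
  rw [hspan]
  exact (hs.union (hs.image continuous_star)).submonoidClosure.span

end TopologicalSpace.IsSeparable

namespace TwoSidedIdeal

section TopologicalClosure

variable {R : Type*} [NonUnitalNonAssocRing R] [TopologicalSpace R] [IsTopologicalRing R]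

def topologicalClosure (I : TwoSidedIdeal R) : TwoSidedIdeal R :=
  .mk' (closure I) (subset_closure I.zero_mem)
    (fun hx hy => map_mem_closure₂ continuous_add hx hy fun _ ha _ hb => I.add_mem ha hb)
    (fun hx => map_mem_closure continuous_neg hx fun _ ha => I.neg_mem ha)
    (fun {x _} hy => map_mem_closure (continuous_const_mul x) hy
      fun _ hb => I.mul_mem_left x _ hb)
    (fun {_ y} hx => map_mem_closure (f := (· * y)) (continuous_mul_const y) hx
      fun _ ha => I.mul_mem_right _ y ha)

lemma coe_topologicalClosure (I : TwoSidedIdeal R) :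
    (I.topologicalClosure : Set R) = closure I := by
  simp [topologicalClosure]

end TopologicalClosure

lemma one_mem_closure_span_singleton {R : Type*} [Ring R] [TopologicalSpace R]
    [IsTopologicalRing R] {b : R}
    (h : ∀ I : TwoSidedIdeal R, IsClosed (I : Set R) → b ∈ I → I = ⊤) :
    (1 : R) ∈ closure (span {b} : Set R) := by
  have htop : (span {b}).topologicalClosure = ⊤ := by
    refine h _ (by rw [coe_topologicalClosure]; exact isClosed_closure) ?_
    rw [← SetLike.mem_coe, coe_topologicalClosure]
    exact subset_closure (subset_span rfl)
  rw [← coe_topologicalClosure, htop]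
  trivial

lemma eq_top_of_norm_one_sub_lt_one {R : Type*} [NormedRing R] [CompleteSpace R]
    {I : TwoSidedIdeal R} {j : R} (hj : j ∈ I) (h : ‖1 - j‖ < 1) : I = ⊤ := by
  obtain ⟨u, hu⟩ := isUnit_one_sub_of_norm_lt_one h
  rw [sub_sub_cancel] at hu
  refine I.eq_top ?_
  simpa [← hu] using I.mul_mem_left (↑u⁻¹ : R) _ hj

end TwoSidedIdeal

section SandwichSum

variable {R : Type*}

def sandwichSum [NonUnitalNonAssocSemiring R] (l : List (R × R)) (b : R) : R :=
  (l.map fun p => p.1 * b * p.2).sum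

@[simp]
lemma sandwichSum_nil [NonUnitalNonAssocSemiring R] (b : R) : sandwichSum [] b = 0 := rfl

@[simp]
lemma sandwichSum_cons [NonUnitalNonAssocSemiring R] (p : R × R) (l : List (R × R)) (b : R) :
    sandwichSum (p :: l) b = p.1 * b * p.2 + sandwichSum l b := List.sum_cons

lemma sandwichSum_append [NonUnitalNonAssocSemiring R] (l m : List (R × R)) (b : R) :
    sandwichSum (l ++ m) b = sandwichSum l b + sandwichSum m b := by
  simp [sandwichSum]

lemma mul_sandwichSum [NonUnitalSemiring R] (x : R) (l : List (R × R)) (b : R) :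
    x * sandwichSum l b = sandwichSum (l.map fun p => (x * p.1, p.2)) b := by
  induction l with
  | nil => simp
  | cons p l ih => simp [mul_add, ih, mul_assoc]

lemma sandwichSum_mul [NonUnitalSemiring R] (l : List (R × R)) (b y : R) :
    sandwichSum l b * y = sandwichSum (l.map fun p => (p.1, p.2 * y)) b := by
  induction l with
  | nil => simp
  | cons p l ih => simp [add_mul, ih, mul_assoc]

lemma continuous_sandwichSum [NonUnitalNonAssocSemiring R] [TopologicalSpace R]
    [IsTopologicalSemiring R] (l : List (R × R)) : Continuous (sandwichSum l) :=
  continuous_list_sum l fun p _ => (continuous_const_mul p.1).mul_const p.2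

lemma TwoSidedIdeal.exists_sandwichSum_eq_of_mem_span_singleton [Ring R] {b z : R}
    (hz : z ∈ span {b}) : ∃ l : List (R × R), sandwichSum l b = z := by
  induction hz using TwoSidedIdeal.span_induction with
  | mem x hx => exact ⟨[(1, 1)], by simp [Set.mem_singleton_iff.1 hx]⟩
  | zero => exact ⟨[], rfl⟩
  | add x y _ _ hx hy =>
    obtain ⟨l, rfl⟩ := hx
    obtain ⟨m, rfl⟩ := hy
    exact ⟨l ++ m, sandwichSum_append l m b⟩
  | neg x _ hx =>
    obtain ⟨l, rfl⟩ := hx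
    exact ⟨_, (mul_sandwichSum (-1) l b).symm.trans (neg_one_mul _)⟩
  | left_absorb a x _ hx =>
    obtain ⟨l, rfl⟩ := hx
    exact ⟨_, (mul_sandwichSum a l b).symm⟩
  | right_absorb y x _ hx =>
    obtain ⟨l, rfl⟩ := hx
    exact ⟨_, (sandwichSum_mul l b y).symm⟩

lemma exists_norm_one_sub_sandwichSum_lt_one [NormedRing R] {b : R}
    (h : ∀ I : TwoSidedIdeal R, IsClosed (I : Set R) → b ∈ I → I = ⊤) :
    ∃ l : List (R × R), ‖1 - sandwichSum l b‖ < 1 := by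
  obtain ⟨z, hz, hdist⟩ :=
    Metric.mem_closure_iff.1 (TwoSidedIdeal.one_mem_closure_span_singleton h) 1 one_pos
  obtain ⟨l, rfl⟩ := TwoSidedIdeal.exists_sandwichSum_eq_of_mem_span_singleton hz
  exact ⟨l, by rwa [← dist_eq_norm]⟩

lemma TwoSidedIdeal.exists_mem_coe_eq_sandwichSum [Ring R] {S : Type*} [SetLike S R]
    [SubringClass S R] {s : S} (I : TwoSidedIdeal s) {b : s} (hb : b ∈ I) {l : List (R × R)}
    (hl : ∀ p ∈ l, p.1 ∈ s ∧ p.2 ∈ s) : ∃ j ∈ I, (j : R) = sandwichSum l b := by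
  induction l with
  | nil => exact ⟨0, I.zero_mem, rfl⟩
  | cons p l ih =>
    obtain ⟨j, hj, hjl⟩ := ih fun q hq => hl q (List.mem_cons_of_mem p hq)
    obtain ⟨hp₁, hp₂⟩ := hl p List.mem_cons_self
    refine ⟨⟨p.1, hp₁⟩ * b * ⟨p.2, hp₂⟩ + j,
      I.add_mem (I.mul_mem_right _ _ (I.mul_mem_left _ _ hb)) hj, ?_⟩
    simp [hjl]

lemma exists_countable_sandwichSum_coefficients {X : Type*} [TopologicalSpace X]
    [SecondCountableTopology X] [NormedRing R] {f : X → R} (hf : Continuous f) {s : Set X}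
    (h : ∀ x ∈ s, ∃ l : List (R × R), ‖1 - sandwichSum l (f x)‖ < 1) :
    ∃ W : Set R, W.Countable ∧ ∀ x ∈ s,
      ∃ l : List (R × R), (∀ p ∈ l, p.1 ∈ W ∧ p.2 ∈ W) ∧ ‖1 - sandwichSum l (f x)‖ < 1 := by
  let U (l : List (R × R)) : Set X := {x | ‖1 - sandwichSum l (f x)‖ < 1}
  have hU (l : List (R × R)) : IsOpen (U l) :=
    isOpen_lt (continuous_const.sub ((continuous_sandwichSum l).comp hf)).norm continuous_const
  obtain ⟨T, hT, hTU⟩ := isOpen_iUnion_countable U hU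
  refine ⟨⋃ l ∈ T, (Prod.fst '' {p | p ∈ l} ∪ Prod.snd '' {p | p ∈ l}),
    hT.biUnion fun l _ => ((l.finite_toSet.image _).union (l.finite_toSet.image _)).countable,
    fun x hx => ?_⟩
  obtain ⟨l, hl⟩ := h x hx
  have hxT : x ∈ ⋃ l ∈ T, U l := hTU ▸ Set.mem_iUnion.2 ⟨l, hl⟩
  obtain ⟨l', hl'T, hxl'⟩ := Set.mem_iUnion₂.1 hxT
  exact ⟨l', fun p hp => ⟨Set.mem_biUnion hl'T (.inl ⟨p, hp, rfl⟩),
    Set.mem_biUnion hl'T (.inr ⟨p, hp, rfl⟩)⟩, hxl'⟩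

end SandwichSum

/-- If `A` is a separable C*-algebra, `B` is a unital C*-algebra, and
`φ : A → B` is a full *-homomorphism (for every nonzero `a`, the smallest closed two-sided
ideal of `B` containing `φ a` is all of `B`, i.e. every closed two-sided ideal containing
`φ a` is `⊤`), then there is a separable closed unital star-subalgebra `B₀` of `B`
containing `φ(A)` such that the corestriction of `φ` to `B₀` is full. -/
theorem exists_separable_corestriction_full {A B : Type u}
    [NonUnitalCStarAlgebra A] [CStarAlgebra B] [SeparableSpace A]
    (φ : A →⋆ₙₐ[ℂ] B)
    (hfull : ∀ a : A, a ≠ 0 →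
      ∀ I : TwoSidedIdeal B, IsClosed (I : Set B) → φ a ∈ I → I = ⊤) :
    ∃ (B₀ : StarSubalgebra ℂ B), IsClosed (B₀ : Set B) ∧ SeparableSpace B₀ ∧
      ∃ hmem : ∀ a : A, φ a ∈ B₀,
        ∀ a : A, a ≠ 0 →
          ∀ I : TwoSidedIdeal B₀, IsClosed (I : Set B₀) →
            (⟨φ a, hmem a⟩ : B₀) ∈ I → I = ⊤ := by
  have hφ : Continuous φ := by open scoped CStarAlgebra in exact map_continuous φ
  obtain ⟨W, hW, hWφ⟩ := exists_countable_sandwichSum_coefficients hφ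
    (s := {a | a ≠ 0}) fun a ha => exists_norm_one_sub_sandwichSum_lt_one (hfull a ha)
  let B₀ := (StarAlgebra.adjoin ℂ (Set.range φ ∪ W)).topologicalClosure
  have hB₀ : Set.range φ ∪ W ⊆ B₀ :=
    (StarAlgebra.subset_adjoin ℂ _).trans (StarSubalgebra.le_topologicalClosure _)
  have hclosed : IsClosed (B₀ : Set B) := StarSubalgebra.isClosed_topologicalClosure _
  have : CompleteSpace B₀ := hclosed.completeSpace_coe
  have hsep : IsSeparable (B₀ : Set B) := by
    rw [StarSubalgebra.topologicalClosure_coe]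
    exact ((isSeparable_range hφ).union hW.isSeparable).starAlgebraAdjoin.closure
  refine ⟨B₀, hclosed, hsep.separableSpace, fun a => hB₀ (.inl ⟨a, rfl⟩), fun a ha I _ hI => ?_⟩
  obtain ⟨l, hlW, hl⟩ := hWφ a ha
  obtain ⟨j, hjI, hj⟩ := I.exists_mem_coe_eq_sandwichSum hI
    fun p hp => ⟨hB₀ (.inr (hlW p hp).1), hB₀ (.inr (hlW p hp).2)⟩
  exact TwoSidedIdeal.eq_top_of_norm_one_sub_lt_one hjI (by simpa [← hj] using hl)
end
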